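/- A thermal channel does not increase free energy: if Ω(ρ) = Tr_A[V (ρ⊗τ_A) V†] where τ_A is a Gibbs state of an ancilla with Hamiltonian H_A at inverse temperature β, and V is a unitary commuting with H⊗𝟙 + 𝟙⊗H_A, then F(Ω(ρ)) ≤ F(ρ) for every density matrix ρ, where F(σ) = Tr(σH) − (1/β) S(σ). -/

import Mathlib

open Matrix BigOperators Kronecker Filter
open scoped ComplexOrder
noncomputable section

/-- A density matrix: positive semidefinite with unit trace. -/
def IsDensityMatrix {n : Type*} [Fintype n] (ρ : Matrix n n ℂ) : Prop :=
  ρ.PosSemidef ∧ ρ.trace = 1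

/-- Von Neumann entropy, defined through the eigenvalues of a Hermitian matrix. -/
def vnEntropy {n : Type*} [Fintype n] [DecidableEq n] (ρ : Matrix n n ℂ) : ℝ :=
  if h : ρ.IsHermitian then -∑ i, (h.eigenvalues i) * Real.log (h.eigenvalues i) else 0

/-- Functional calculus: logarithm of a Hermitian matrix (0 otherwise). -/
def hermLog {n : Type*} [Fintype n] [DecidableEq n] (A : Matrix n n ℂ) : Matrix n n ℂ :=
  if h : A.IsHermitian then
    (h.eigenvectorUnitary : Matrix n n ℂ) *
      Matrix.diagonal (fun i => (Real.log (h.eigenvalues i) : ℂ)) *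
      (star (h.eigenvectorUnitary : Matrix n n ℂ))
  else 0

/-- Functional calculus: exponential of a Hermitian matrix (0 otherwise). -/
def hermExp {n : Type*} [Fintype n] [DecidableEq n] (A : Matrix n n ℂ) : Matrix n n ℂ :=
  if h : A.IsHermitian then
    (h.eigenvectorUnitary : Matrix n n ℂ) *
      Matrix.diagonal (fun i => (Real.exp (h.eigenvalues i) : ℂ)) *
      (star (h.eigenvectorUnitary : Matrix n n ℂ))
  else 0

/-- Quantum relative entropy D(ρ‖σ) = Tr(ρ log ρ) - Tr(ρ log σ). -/
def relEntropy {n : Type*} [Fintype n] [DecidableEq n] (ρ σ : Matrix n n ℂ) : ℝ :=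
  ((ρ * hermLog ρ).trace - (ρ * hermLog σ).trace).re

/-- Gibbs (thermal) state at inverse temperature β. -/
def gibbs {n : Type*} [Fintype n] [DecidableEq n] (β : ℝ) (Hm : Matrix n n ℂ) : Matrix n n ℂ :=
  (hermExp ((-β : ℂ) • Hm)).trace⁻¹ • hermExp ((-β : ℂ) • Hm)

/-- Choi matrix of a map on matrices. -/
def choiMatrix {n m : Type*} [Fintype n] [DecidableEq n] [Fintype m]
    (Φ : Matrix n n ℂ → Matrix m m ℂ) : Matrix (n × m) (n × m) ℂ :=
  fun p q => Φ (Matrix.single p.1 q.1 1) p.2 q.2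

/-- A quantum channel: linear, completely positive (PSD Choi matrix), trace preserving. -/
def IsCPTP {n m : Type*} [Fintype n] [DecidableEq n] [Fintype m]
    (Φ : Matrix n n ℂ → Matrix m m ℂ) : Prop :=
  (∀ (a : ℂ) (A B : Matrix n n ℂ), Φ (a • A + B) = a • Φ A + Φ B) ∧
  (choiMatrix Φ).PosSemidef ∧ (∀ A : Matrix n n ℂ, (Φ A).trace = A.trace)

/-- Tensor product of two channels, acting on bipartite matrices. -/
def tensorChan {n m : Type*} [Fintype n] [DecidableEq n] [Fintype m] [DecidableEq m]
    (Φ₁ : Matrix n n ℂ → Matrix n n ℂ) (Φ₂ : Matrix m m ℂ → Matrix m m ℂ)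
    (A : Matrix (n × m) (n × m) ℂ) : Matrix (n × m) (n × m) ℂ :=
  fun p q => ∑ a, ∑ b, ∑ c, ∑ d, A (a, c) (b, d) *
    (Φ₁ (Matrix.single a b 1)) p.1 q.1 * (Φ₂ (Matrix.single c d 1)) p.2 q.2

/-- Partial trace over the second factor. -/
def ptrace₂ {n m : Type*} [Fintype m] (ρ : Matrix (n × m) (n × m) ℂ) : Matrix n n ℂ :=
  fun i j => ∑ k, ρ (i, k) (j, k)

/-- Partial trace over the first factor. -/
def ptrace₁ {n m : Type*} [Fintype n] (ρ : Matrix (n × m) (n × m) ℂ) : Matrix m m ℂ :=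
  fun k l => ∑ i, ρ (i, k) (i, l)

/-- Free energy F(ρ) = Tr(ρH) - kT S(ρ). -/
def freeEnergy {n : Type*} [Fintype n] [DecidableEq n]
    (ρ Hm : Matrix n n ℂ) (kT : ℝ) : ℝ :=
  ((ρ * Hm).trace).re - kT * vnEntropy ρ

/-- Free energy difference ΔF(ρ, Ω) = F(Ω(ρ)) - F(ρ). -/
def deltaF {n : Type*} [Fintype n] [DecidableEq n]
    (Φ : Matrix n n ℂ → Matrix n n ℂ) (ρ Hm : Matrix n n ℂ) (kT : ℝ) : ℝ :=
  freeEnergy (Φ ρ) Hm kT - freeEnergy ρ Hm kT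

/-- Distillable work W(Ω,H) = sup over density matrices ρ of ΔF(ρ, Ω). -/
def distillableWork {n : Type*} [Fintype n] [DecidableEq n]
    (Φ : Matrix n n ℂ → Matrix n n ℂ) (Hm : Matrix n n ℂ) (kT : ℝ) : ℝ :=
  sSup { w | ∃ ρ, IsDensityMatrix ρ ∧ w = deltaF Φ ρ Hm kT }

/-- Marginal of a multipartite state at site `i`. -/
def marginal {ι : Type*} [Fintype ι] [DecidableEq ι] {H : ι → Type*}
    [∀ i, Fintype (H i)] [∀ i, DecidableEq (H i)]
    (σ : Matrix (∀ j, H j) (∀ j, H j) ℂ) (i : ι) : Matrix (H i) (H i) ℂ :=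
  fun a b => ∑ f : ∀ j, H j, if f i = a then σ f (Function.update f i b) else 0

/-- Tensor product of a family of channels, acting on a multipartite matrix. -/
def tensorChanPi {ι : Type*} [Fintype ι] [DecidableEq ι] {H : ι → Type*}
    [∀ i, Fintype (H i)] [∀ i, DecidableEq (H i)]
    (Φ : ∀ i, Matrix (H i) (H i) ℂ → Matrix (H i) (H i) ℂ)
    (σ : Matrix (∀ j, H j) (∀ j, H j) ℂ) : Matrix (∀ j, H j) (∀ j, H j) ℂ :=
  fun f g => ∑ F : ∀ j, H j, ∑ G : ∀ j, H j,
    σ F G * ∏ j, (Φ j (Matrix.single (F j) (G j) 1)) (f j) (g j)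

/-- Embedding of a single-site operator into a multipartite system. -/
def embedAt {ι : Type*} [Fintype ι] [DecidableEq ι] {H : ι → Type*}
    [∀ i, Fintype (H i)] [∀ i, DecidableEq (H i)]
    (i : ι) (A : Matrix (H i) (H i) ℂ) : Matrix (∀ j, H j) (∀ j, H j) ℂ :=
  fun f g => A (f i) (g i) * ∏ j ∈ Finset.univ.erase i, (if f j = g j then 1 else 0)

/-- Binary entropy. -/
def binEntropy (p : ℝ) : ℝ := -p * Real.log p - (1 - p) * Real.log (1 - p)

/-! Write the ancilla's Gibbs state as `τ` and the joint output as `σ = V (ρ ⊗ τ) Vᴴ`. Unitary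
invariance and additivity give `S(σ) = S(ρ) + S(τ)`, and subadditivity gives
`S(σ) ≤ S(Ω ρ) + S(σ_A)` for the ancilla marginal `σ_A`. Since `V` commutes with the total
Hamiltonian, the energy `Tr(Ω ρ H) + Tr(σ_A H_A)` equals `Tr(ρ H) + Tr(τ H_A)`. Together,
`F(Ω ρ) - F(ρ) ≤ F_A(τ) - F_A(σ_A)`, which is `≤ 0` because the Gibbs state minimises the free
energy. Both the minimisation and subadditivity come from Klein's inequality
`Tr σ log σ - Tr σ log τ ≥ Tr σ - Tr τ`, which reduces to the scalar inequality through the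
doubly stochastic matrix `|(Uᴴ W)ᵢⱼ|²` of overlaps of the two eigenbases; for subadditivity it is
applied against the product of the two marginals, each shifted by `ε`, and then `ε → 0`. -/

section ConjDiagonal

variable {m : Type*} [Fintype m] [DecidableEq m]

def conjDiagonal (U : Matrix m m ℂ) (d : m → ℝ) : Matrix m m ℂ :=
  U * diagonal (fun i => (d i : ℂ)) * Uᴴ

lemma Matrix.IsHermitian.eq_conjDiagonal {A : Matrix m m ℂ} (hA : A.IsHermitian) :
    A = conjDiagonal (hA.eigenvectorUnitary : Matrix m m ℂ) hA.eigenvalues := by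
  conv_lhs => rw [hA.spectral_theorem, Unitary.conjStarAlgAut_apply, star_eq_conjTranspose]
  rfl

lemma isHermitian_conjDiagonal (U : Matrix m m ℂ) (d : m → ℝ) :
    (conjDiagonal U d).IsHermitian := by
  refine isHermitian_mul_mul_conjTranspose U ?_
  simp [IsHermitian, diagonal_conjTranspose]

lemma posSemidef_conjDiagonal (U : Matrix m m ℂ) {d : m → ℝ} (hd : ∀ i, 0 ≤ d i) :
    (conjDiagonal U d).PosSemidef :=
  (posSemidef_diagonal_iff.mpr fun i => Complex.zero_le_real.mpr (hd i)).mul_mul_conjTranspose_same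
    U

lemma conjDiagonal_add (U : Matrix m m ℂ) (d e : m → ℝ) :
    conjDiagonal U (d + e) = conjDiagonal U d + conjDiagonal U e := by
  simp only [conjDiagonal, Pi.add_apply, Complex.ofReal_add, ← diagonal_add, Matrix.mul_add,
    Matrix.add_mul]

lemma smul_conjDiagonal (U : Matrix m m ℂ) (r : ℝ) (d : m → ℝ) :
    (r : ℂ) • conjDiagonal U d = conjDiagonal U (r • d) := by
  rw [conjDiagonal, conjDiagonal, ← Matrix.smul_mul, ← Matrix.mul_smul, ← diagonal_smul]
  congr 3
  ext i
  simp

variable {U : Matrix m m ℂ}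

lemma conjDiagonal_const (hU : U ∈ unitaryGroup m ℂ) (c : ℝ) :
    conjDiagonal U (fun _ => c) = (c : ℂ) • 1 := by
  rw [conjDiagonal, ← smul_one_eq_diagonal, Matrix.mul_smul, Matrix.mul_one, Matrix.smul_mul,
    ← star_eq_conjTranspose, mem_unitaryGroup_iff.mp hU]

lemma trace_conjDiagonal (hU : U ∈ unitaryGroup m ℂ) (d : m → ℝ) :
    (conjDiagonal U d).trace = ∑ i, (d i : ℂ) := by
  rw [conjDiagonal, trace_mul_cycle, ← star_eq_conjTranspose, mem_unitaryGroup_iff'.mp hU,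
    one_mul, trace_diagonal]

lemma conjDiagonal_mul_conjDiagonal (hU : U ∈ unitaryGroup m ℂ) (d e : m → ℝ) :
    conjDiagonal U d * conjDiagonal U e = conjDiagonal U (d * e) := by
  have hUU : Uᴴ * U = 1 := by rw [← star_eq_conjTranspose, mem_unitaryGroup_iff'.mp hU]
  simp only [conjDiagonal, Matrix.mul_assoc]
  rw [← Matrix.mul_assoc Uᴴ, hUU, Matrix.one_mul, ← Matrix.mul_assoc (diagonal _),
    diagonal_mul_diagonal]
  simp

lemma unitary_mul_conjDiagonal_mul (V : Matrix m m ℂ) (d : m → ℝ) :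
    V * conjDiagonal U d * Vᴴ = conjDiagonal (V * U) d := by
  simp only [conjDiagonal, conjTranspose_mul, Matrix.mul_assoc]

lemma kronecker_conjDiagonal {k : Type*} [Fintype k] [DecidableEq k] {W : Matrix k k ℂ}
    (d : m → ℝ) (e : k → ℝ) :
    conjDiagonal U d ⊗ₖ conjDiagonal W e = conjDiagonal (U ⊗ₖ W) (fun x => d x.1 * e x.2) := by
  rw [conjDiagonal, conjDiagonal, conjDiagonal, mul_kronecker_mul, mul_kronecker_mul,
    diagonal_kronecker_diagonal, conjTranspose_kronecker]
  push_cast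
  rfl

open Polynomial in
lemma sum_eigenvalues_conjDiagonal (hU : U ∈ unitaryGroup m ℂ) (d : m → ℝ) (f : ℝ → ℝ) :
    ∑ i, f ((isHermitian_conjDiagonal U d).eigenvalues i) = ∑ i, f (d i) := by
  have hUU : Uᴴ * U = 1 := by rw [← star_eq_conjTranspose, mem_unitaryGroup_iff'.mp hU]
  have hchar : (conjDiagonal U d).charpoly = ∏ i, (X - C (d i : ℂ)) := by
    rw [conjDiagonal, charpoly_mul_comm, ← Matrix.mul_assoc, hUU, Matrix.one_mul,
      charpoly_diagonal]
  have hroots := (isHermitian_conjDiagonal U d).roots_charpoly_eq_eigenvalues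
  rw [hchar, roots_prod _ _ (by simp [Finset.prod_ne_zero_iff, X_sub_C_ne_zero])] at hroots
  simp only [roots_X_sub_C, Multiset.bind_singleton] at hroots
  have h := congrArg (fun s => (s.map fun z : ℂ => f z.re).sum) hroots
  simp only [Multiset.map_map, Function.comp_def, Complex.ofReal_re] at h
  exact h.symm

open Real in
lemma vnEntropy_conjDiagonal (hU : U ∈ unitaryGroup m ℂ) (d : m → ℝ) :
    vnEntropy (conjDiagonal U d) = ∑ i, negMulLog (d i) := by
  rw [vnEntropy, dif_pos (isHermitian_conjDiagonal U d),
    sum_eigenvalues_conjDiagonal hU d (fun x => x * log x), ← Finset.sum_neg_distrib]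
  simp only [negMulLog, neg_mul]

end ConjDiagonal

section Entropy

variable {m k : Type*} [Fintype m] [DecidableEq m] [Fintype k] [DecidableEq k]

lemma Matrix.IsHermitian.sum_eigenvalues_eq_re_trace {A : Matrix m m ℂ} (hA : A.IsHermitian) :
    ∑ i, hA.eigenvalues i = A.trace.re := by
  simp [hA.trace_eq_sum_eigenvalues, Complex.re_sum]

lemma Matrix.IsHermitian.vnEntropy_eq {A : Matrix m m ℂ} (hA : A.IsHermitian) :
    vnEntropy A = -∑ i, hA.eigenvalues i * Real.log (hA.eigenvalues i) := by
  rw [vnEntropy, dif_pos hA]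

lemma vnEntropy_unitary_conj {A : Matrix m m ℂ} (hA : A.IsHermitian) {V : Matrix m m ℂ}
    (hV : V ∈ unitaryGroup m ℂ) : vnEntropy (V * A * Vᴴ) = vnEntropy A := by
  have hU := hA.eigenvectorUnitary.2
  rw [hA.eq_conjDiagonal, unitary_mul_conjDiagonal_mul, vnEntropy_conjDiagonal (mul_mem hV hU),
    vnEntropy_conjDiagonal hU]

lemma vnEntropy_kronecker {A : Matrix m m ℂ} {B : Matrix k k ℂ} (hA : A.IsHermitian)
    (hB : B.IsHermitian) (hAtr : A.trace = 1) (hBtr : B.trace = 1) :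
    vnEntropy (A ⊗ₖ B) = vnEntropy A + vnEntropy B := by
  have hUA := hA.eigenvectorUnitary.2
  have hUB := hB.eigenvectorUnitary.2
  have hsumA : ∑ i, hA.eigenvalues i = 1 := by simp [hA.sum_eigenvalues_eq_re_trace, hAtr]
  have hsumB : ∑ i, hB.eigenvalues i = 1 := by simp [hB.sum_eigenvalues_eq_re_trace, hBtr]
  rw [hA.eq_conjDiagonal, hB.eq_conjDiagonal, kronecker_conjDiagonal,
    vnEntropy_conjDiagonal (kronecker_mem_unitary hUA hUB), vnEntropy_conjDiagonal hUA,
    vnEntropy_conjDiagonal hUB, Fintype.sum_prod_type]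
  simp only [Real.negMulLog_mul, Finset.sum_add_distrib, ← Finset.sum_mul, ← Finset.mul_sum,
    hsumA, hsumB, one_mul]

end Entropy

section PartialTrace

variable {n k : Type*}

lemma ptrace₂_eq_sum_submatrix [Fintype k] (M : Matrix (n × k) (n × k) ℂ) :
    ptrace₂ M = ∑ j, M.submatrix (·, j) (·, j) := by
  ext i i'
  simp [ptrace₂, Matrix.sum_apply]

lemma Matrix.PosSemidef.ptrace₂ [Fintype k] {M : Matrix (n × k) (n × k) ℂ} (hM : M.PosSemidef) :
    (ptrace₂ M).PosSemidef := by
  rw [ptrace₂_eq_sum_submatrix]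
  exact posSemidef_sum _ fun j _ => hM.submatrix _

lemma Matrix.PosSemidef.ptrace₁ [Fintype n] {M : Matrix (n × k) (n × k) ℂ} (hM : M.PosSemidef) :
    (ptrace₁ M).PosSemidef :=
  (hM.submatrix Prod.swap).ptrace₂

variable [Fintype n] [Fintype k]

lemma trace_ptrace₂_mul [DecidableEq k] (M : Matrix (n × k) (n × k) ℂ) (X : Matrix n n ℂ) :
    (ptrace₂ M * X).trace = (M * (X ⊗ₖ (1 : Matrix k k ℂ))).trace := by
  simp only [trace, diag, mul_apply, ptrace₂, kronecker_apply, one_apply, Fintype.sum_prod_type,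
    Finset.sum_mul, mul_ite, mul_one, mul_zero, Finset.sum_ite_eq', Finset.mem_univ, if_true]
  exact Finset.sum_congr rfl fun _ _ => Finset.sum_comm

lemma trace_ptrace₁_mul [DecidableEq n] (M : Matrix (n × k) (n × k) ℂ) (Y : Matrix k k ℂ) :
    (ptrace₁ M * Y).trace = (M * ((1 : Matrix n n ℂ) ⊗ₖ Y)).trace := by
  simp only [trace, diag_apply, mul_apply, ptrace₁, Finset.sum_mul, kroneckerMap_apply, one_apply,
    ite_mul, one_mul, zero_mul, mul_ite, mul_zero, Fintype.sum_prod_type, Finset.sum_ite_irrel,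
    Finset.sum_const_zero, Finset.sum_ite_eq', Finset.mem_univ, if_true]
  exact (Finset.sum_congr rfl fun _ _ => Finset.sum_comm).trans Finset.sum_comm

lemma trace_ptrace₂ (M : Matrix (n × k) (n × k) ℂ) : (ptrace₂ M).trace = M.trace := by
  classical
  simpa using trace_ptrace₂_mul M 1

lemma trace_ptrace₁ (M : Matrix (n × k) (n × k) ℂ) : (ptrace₁ M).trace = M.trace := by
  classical
  simpa using trace_ptrace₁_mul M 1

end PartialTrace

section Klein

open Real

lemma sub_le_mul_log_sub_mul_log {p q : ℝ} (hp : 0 ≤ p) (hq : 0 < q) :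
    p - q ≤ p * log p - p * log q := by
  rcases hp.eq_or_lt with rfl | hp
  · simpa using hq.le
  · have h := one_sub_inv_le_log_of_pos (div_pos hp hq)
    rw [log_div hp.ne' hq.ne', inv_div] at h
    have := mul_le_mul_of_nonneg_left h hp.le
    rw [mul_sub, mul_one, mul_div_cancel₀ _ hp.ne'] at this
    linarith

lemma sum_mul_mul_log_le {ι κ : Type*} [Fintype ι] [Fintype κ] {c : ι → κ → ℝ}
    (hc : ∀ i j, 0 ≤ c i j) (hrow : ∀ i, ∑ j, c i j = 1) (hcol : ∀ j, ∑ i, c i j = 1)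
    {p : ι → ℝ} {q : κ → ℝ} (hp : ∀ i, 0 ≤ p i) (hq : ∀ j, 0 < q j) :
    ∑ i, ∑ j, c i j * (p i * log (q j)) ≤ ∑ i, p i * log (p i) - ∑ i, p i + ∑ j, q j :=
  calc ∑ i, ∑ j, c i j * (p i * log (q j))
      ≤ ∑ i, ∑ j, c i j * (p i * log (p i) - p i + q j) := by
        gcongr with i _ j _
        · exact hc i j
        · linarith [sub_le_mul_log_sub_mul_log (hp i) (hq j)]
    _ = ∑ i, p i * log (p i) - ∑ i, p i + ∑ j, q j := by
        simp only [mul_add, mul_sub, Finset.sum_add_distrib, Finset.sum_sub_distrib,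
          ← Finset.sum_mul, hrow, one_mul]
        rw [Finset.sum_comm (f := fun i j => c i j * q j)]
        simp only [← Finset.sum_mul, hcol, one_mul]

variable {m : Type*} [Fintype m] [DecidableEq m]

lemma sum_normSq_row_of_mem_unitaryGroup {M : Matrix m m ℂ} (hM : M ∈ unitaryGroup m ℂ)
    (i : m) : ∑ j, Complex.normSq (M i j) = 1 := by
  have h := congrFun (congrFun (mem_unitaryGroup_iff.mp hM) i) i
  simp only [mul_apply, star_apply, Complex.star_def, Complex.mul_conj, one_apply_eq] at h
  exact_mod_cast h

lemma sum_normSq_col_of_mem_unitaryGroup {M : Matrix m m ℂ} (hM : M ∈ unitaryGroup m ℂ)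
    (j : m) : ∑ i, Complex.normSq (M i j) = 1 := by
  simpa using sum_normSq_row_of_mem_unitaryGroup (Unitary.star_mem hM) j

lemma trace_conjDiagonal_mul_conjDiagonal (U W : Matrix m m ℂ) (p l : m → ℝ) :
    (conjDiagonal U p * conjDiagonal W l).trace
      = ((∑ i, ∑ j, Complex.normSq ((Uᴴ * W) i j) * (p i * l j) : ℝ) : ℂ) := by
  set M := Uᴴ * W
  have hcyc : (conjDiagonal U p * conjDiagonal W l).trace
      = (diagonal (fun i => (p i : ℂ)) * (M * diagonal (fun j => (l j : ℂ)) * Mᴴ)).trace := by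
    simp only [conjDiagonal, Matrix.mul_assoc]
    rw [trace_mul_comm U]
    simp only [M, conjTranspose_mul, conjTranspose_conjTranspose, Matrix.mul_assoc]
  rw [hcyc]
  simp only [trace, diagonal, diag_apply, mul_apply, of_apply, mul_ite, mul_zero,
    Finset.sum_ite_eq', Finset.mem_univ, if_true, conjTranspose_apply, RCLike.star_def,
    Finset.mul_sum, ite_mul, zero_mul, Finset.sum_ite_irrel, Finset.sum_const_zero,
    Finset.sum_ite_eq, Complex.ofReal_sum, Complex.ofReal_mul, ← Complex.mul_conj]
  exact Finset.sum_congr rfl fun _ _ => Finset.sum_congr rfl fun _ _ => by ring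

lemma re_trace_mul_conjDiagonal_log_le {σ W : Matrix m m ℂ} (hσ : σ.PosSemidef)
    (hW : W ∈ unitaryGroup m ℂ) {q : m → ℝ} (hq : ∀ j, 0 < q j) :
    (σ * conjDiagonal W (fun j => log (q j))).trace.re
      ≤ -vnEntropy σ - σ.trace.re + ∑ j, q j := by
  set U := (hσ.1.eigenvectorUnitary : Matrix m m ℂ)
  have hM : Uᴴ * W ∈ unitaryGroup m ℂ := mul_mem (Unitary.star_mem hσ.1.eigenvectorUnitary.2) hW
  rw [hσ.1.vnEntropy_eq, neg_neg, ← hσ.1.sum_eigenvalues_eq_re_trace]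
  conv_lhs => rw [hσ.1.eq_conjDiagonal, trace_conjDiagonal_mul_conjDiagonal, Complex.ofReal_re]
  exact sum_mul_mul_log_le (fun _ _ => Complex.normSq_nonneg _)
    (sum_normSq_row_of_mem_unitaryGroup hM) (sum_normSq_col_of_mem_unitaryGroup hM)
    hσ.eigenvalues_nonneg hq

end Klein

section Gibbs

open Real

variable {m : Type*} [Fintype m] [DecidableEq m]

lemma exists_gibbs_eq_conjDiagonal [Nonempty m] (β : ℝ) {H : Matrix m m ℂ} (hH : H.IsHermitian) :
    ∃ (W : Matrix m m ℂ) (q : m → ℝ) (c : ℝ), W ∈ unitaryGroup m ℂ ∧ (∀ j, 0 < q j) ∧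
      ∑ j, q j = 1 ∧ gibbs β H = conjDiagonal W q ∧
      conjDiagonal W (fun j => log (q j)) = (-β : ℂ) • H + (c : ℂ) • 1 := by
  have hB : ((-β : ℂ) • H).IsHermitian := hH.smul (by simp [IsSelfAdjoint])
  set W := (hB.eigenvectorUnitary : Matrix m m ℂ)
  have hW : W ∈ unitaryGroup m ℂ := hB.eigenvectorUnitary.2
  set μ := hB.eigenvalues
  set Z := ∑ j, exp (μ j)
  have hZ : 0 < Z := Finset.sum_pos (fun j _ => exp_pos _) Finset.univ_nonempty
  have hexp : hermExp ((-β : ℂ) • H) = conjDiagonal W (fun j => exp (μ j)) := by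
    rw [hermExp, dif_pos hB, star_eq_conjTranspose]
    rfl
  refine ⟨W, fun j => exp (μ j) / Z, -log Z, hW, fun j => div_pos (exp_pos _) hZ, ?_, ?_, ?_⟩
  · rw [← Finset.sum_div, div_self hZ.ne']
  · rw [gibbs, hexp, trace_conjDiagonal hW, ← Complex.ofReal_sum, ← Complex.ofReal_inv,
      smul_conjDiagonal]
    simp only [div_eq_inv_mul]
    rfl
  · have hlog : (fun j => log (exp (μ j) / Z)) = μ + fun _ => -log Z := by
      ext j
      rw [log_div (exp_pos _).ne' hZ.ne', log_exp]
      simp [sub_eq_add_neg]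
    rw [hlog, conjDiagonal_add, conjDiagonal_const hW, ← hB.eq_conjDiagonal]

lemma isDensityMatrix_gibbs [Nonempty m] (β : ℝ) {H : Matrix m m ℂ} (hH : H.IsHermitian) :
    IsDensityMatrix (gibbs β H) := by
  obtain ⟨W, q, -, hW, hq, hsum, hgibbs, -⟩ := exists_gibbs_eq_conjDiagonal β hH
  rw [hgibbs]
  refine ⟨posSemidef_conjDiagonal W fun j => (hq j).le, ?_⟩
  rw [trace_conjDiagonal hW]
  exact_mod_cast hsum

lemma freeEnergy_gibbs_le [Nonempty m] {β : ℝ} (hβ : 0 < β) {H : Matrix m m ℂ}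
    (hH : H.IsHermitian) {σ : Matrix m m ℂ} (hσ : IsDensityMatrix σ) :
    freeEnergy (gibbs β H) H (1 / β) ≤ freeEnergy σ H (1 / β) := by
  obtain ⟨W, q, c, hW, hq, hsum, hgibbs, hlog⟩ := exists_gibbs_eq_conjDiagonal β hH
  have hτ := isDensityMatrix_gibbs β hH
  have hlin : ∀ X : Matrix m m ℂ, X.trace = 1 →
      (X * conjDiagonal W (fun j => log (q j))).trace.re = -β * (X * H).trace.re + c := by
    intro X hX
    simp [hlog, Matrix.mul_add, hX]
  have hσK := re_trace_mul_conjDiagonal_log_le hσ.1 hW hq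
  have hτK : (gibbs β H * conjDiagonal W (fun j => log (q j))).trace.re
      = -vnEntropy (gibbs β H) := by
    rw [hgibbs, conjDiagonal_mul_conjDiagonal hW, trace_conjDiagonal hW, vnEntropy_conjDiagonal hW]
    simp [Real.negMulLog, Complex.re_sum]
  rw [hlin σ hσ.2, hσ.2, hsum, Complex.one_re] at hσK
  rw [hlin _ hτ.2] at hτK
  have hSτ : vnEntropy (gibbs β H) = β * (gibbs β H * H).trace.re - c := by linarith
  have hSσ : vnEntropy σ ≤ β * (σ * H).trace.re - c := by linarith
  calc freeEnergy (gibbs β H) H (1 / β)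
      = c / β := by rw [freeEnergy, hSτ]; field_simp; ring
    _ = (σ * H).trace.re - 1 / β * (β * (σ * H).trace.re - c) := by field_simp; ring
    _ ≤ freeEnergy σ H (1 / β) := by rw [freeEnergy]; gcongr

end Gibbs

section Subadditivity

open Real Topology

lemma tendsto_mul_log_add_nhdsGT {p : ℝ} (hp : 0 ≤ p) :
    Tendsto (fun ε => p * log (p + ε)) (𝓝[>] 0) (𝓝 (p * log p)) := by
  rcases hp.eq_or_lt with rfl | hp
  · simp
  · refine (Tendsto.const_mul p ?_).mono_left nhdsWithin_le_nhds
    simpa using ((continuous_const_add p).tendsto 0).log (by simpa using hp.ne')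

variable {n k : Type*} [Fintype n] [DecidableEq n] [Fintype k] [DecidableEq k]

lemma conjDiagonal_kronecker_add {U : Matrix n n ℂ} {W : Matrix k k ℂ}
    (hU : U ∈ unitaryGroup n ℂ) (hW : W ∈ unitaryGroup k ℂ) (f : n → ℝ) (g : k → ℝ) :
    conjDiagonal (U ⊗ₖ W) (fun x => f x.1 + g x.2)
      = conjDiagonal U f ⊗ₖ 1 + 1 ⊗ₖ conjDiagonal W g := by
  calc conjDiagonal (U ⊗ₖ W) (fun x => f x.1 + g x.2)
      = conjDiagonal U f ⊗ₖ conjDiagonal W (fun _ => 1)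
          + conjDiagonal U (fun _ => 1) ⊗ₖ conjDiagonal W g := by
        rw [kronecker_conjDiagonal, kronecker_conjDiagonal, ← conjDiagonal_add]
        congr 1
        ext x
        simp
    _ = conjDiagonal U f ⊗ₖ 1 + 1 ⊗ₖ conjDiagonal W g := by
        simp [conjDiagonal_const hU, conjDiagonal_const hW]

-- The marginals may be singular, and Klein's inequality fails against Lean's `log 0 = 0`:
-- hence the shift of their spectra by `ε > 0`.
lemma sum_mul_log_eigenvalues_ptrace_add_le {M : Matrix (n × k) (n × k) ℂ} (hM : M.PosSemidef)
    {ε : ℝ} (hε : 0 < ε) :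
    ∑ i, hM.ptrace₂.1.eigenvalues i * log (hM.ptrace₂.1.eigenvalues i + ε)
      + ∑ j, hM.ptrace₁.1.eigenvalues j * log (hM.ptrace₁.1.eigenvalues j + ε)
      ≤ -vnEntropy M - M.trace.re
        + (∑ i, (hM.ptrace₂.1.eigenvalues i + ε)) * ∑ j, (hM.ptrace₁.1.eigenvalues j + ε) := by
  have hpε i : 0 < hM.ptrace₂.1.eigenvalues i + ε :=
    add_pos_of_nonneg_of_pos (hM.ptrace₂.eigenvalues_nonneg i) hε
  have hqε j : 0 < hM.ptrace₁.1.eigenvalues j + ε :=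
    add_pos_of_nonneg_of_pos (hM.ptrace₁.eigenvalues_nonneg j) hε
  set hA := hM.ptrace₂.1
  set hB := hM.ptrace₁.1
  set p := hA.eigenvalues
  set q := hB.eigenvalues
  set U := (hA.eigenvectorUnitary : Matrix n n ℂ)
  set W := (hB.eigenvectorUnitary : Matrix k k ℂ)
  have hU : U ∈ unitaryGroup n ℂ := hA.eigenvectorUnitary.2
  have hW : W ∈ unitaryGroup k ℂ := hB.eigenvectorUnitary.2
  have h := re_trace_mul_conjDiagonal_log_le hM (kronecker_mem_unitary hU hW)
    (q := fun x => (p x.1 + ε) * (q x.2 + ε)) fun x => mul_pos (hpε x.1) (hqε x.2)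
  simp only [log_mul (hpε _).ne' (hqε _).ne'] at h
  rw [conjDiagonal_kronecker_add hU hW (fun i => log (p i + ε)) (fun j => log (q j + ε)),
    Matrix.mul_add, trace_add, ← trace_ptrace₂_mul, ← trace_ptrace₁_mul, hA.eq_conjDiagonal,
    hB.eq_conjDiagonal, conjDiagonal_mul_conjDiagonal hU, conjDiagonal_mul_conjDiagonal hW,
    trace_conjDiagonal hU, trace_conjDiagonal hW, Fintype.sum_prod_type] at h
  simpa [Complex.re_sum, Finset.sum_mul_sum] using h

theorem vnEntropy_le_vnEntropy_ptrace₂_add_vnEntropy_ptrace₁ {M : Matrix (n × k) (n × k) ℂ}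
    (hM : IsDensityMatrix M) : vnEntropy M ≤ vnEntropy (ptrace₂ M) + vnEntropy (ptrace₁ M) := by
  set hA := hM.1.ptrace₂.1
  set hB := hM.1.ptrace₁.1
  set p := hA.eigenvalues
  set q := hB.eigenvalues
  have hp : ∑ i, p i = 1 := by simp [p, hA.sum_eigenvalues_eq_re_trace, trace_ptrace₂, hM.2]
  have hq : ∑ j, q j = 1 := by simp [q, hB.sum_eigenvalues_eq_re_trace, trace_ptrace₁, hM.2]
  have hlimL : Tendsto (fun ε => ∑ i, p i * log (p i + ε) + ∑ j, q j * log (q j + ε)) (𝓝[>] 0)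
      (𝓝 (∑ i, p i * log (p i) + ∑ j, q j * log (q j))) :=
    (tendsto_finsetSum _ fun i _ => tendsto_mul_log_add_nhdsGT
      (hM.1.ptrace₂.eigenvalues_nonneg i)).add
    (tendsto_finsetSum _ fun j _ => tendsto_mul_log_add_nhdsGT
      (hM.1.ptrace₁.eigenvalues_nonneg j))
  have hlimR : Tendsto (fun ε => -vnEntropy M - 1 + (∑ i, (p i + ε)) * ∑ j, (q j + ε)) (𝓝[>] 0)
      (𝓝 (-vnEntropy M)) :=
    ((by fun_prop : Continuous fun ε => -vnEntropy M - 1 + (∑ i, (p i + ε)) * ∑ j, (q j + ε))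
      |>.tendsto' 0 _ (by simp [hp, hq])).mono_left nhdsWithin_le_nhds
  have hle := le_of_tendsto_of_tendsto hlimL hlimR <|
    eventually_mem_nhdsWithin.mono fun _ hε => by
      simpa [hM.2] using sum_mul_log_eigenvalues_ptrace_add_le hM.1 hε
  rw [hA.vnEntropy_eq, hB.vnEntropy_eq]
  linarith

end Subadditivity

section Bipartite

variable {m k : Type*} [Fintype m] [Fintype k]

lemma IsDensityMatrix.kronecker {A : Matrix m m ℂ} {B : Matrix k k ℂ} (hA : IsDensityMatrix A)
    (hB : IsDensityMatrix B) : IsDensityMatrix (A ⊗ₖ B) :=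
  ⟨hA.1.kronecker hB.1, by rw [trace_kronecker, hA.2, hB.2, one_mul]⟩

lemma IsDensityMatrix.ptrace₁ {M : Matrix (m × k) (m × k) ℂ} (hM : IsDensityMatrix M) :
    IsDensityMatrix (ptrace₁ M) :=
  ⟨hM.1.ptrace₁, by rw [trace_ptrace₁, hM.2]⟩

variable [DecidableEq m] [DecidableEq k]

lemma IsDensityMatrix.unitary_conj {A V : Matrix m m ℂ} (hA : IsDensityMatrix A)
    (hV : V ∈ unitaryGroup m ℂ) : IsDensityMatrix (V * A * Vᴴ) :=
  ⟨hA.1.mul_mul_conjTranspose_same V, by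
    rw [trace_mul_cycle, ← star_eq_conjTranspose, mem_unitaryGroup_iff'.mp hV, one_mul, hA.2]⟩

lemma trace_unitary_conj_mul_of_commute {V K : Matrix m m ℂ} (hV : V ∈ unitaryGroup m ℂ)
    (hVK : V * K = K * V) (A : Matrix m m ℂ) : (V * A * Vᴴ * K).trace = (A * K).trace := by
  rw [Matrix.mul_assoc, trace_mul_cycle, Matrix.mul_assoc Vᴴ K V, ← hVK,
    ← Matrix.mul_assoc, ← star_eq_conjTranspose, mem_unitaryGroup_iff'.mp hV, Matrix.one_mul,
    trace_mul_comm]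

lemma trace_kronecker_mul_add_kronecker (A X : Matrix m m ℂ) (B Y : Matrix k k ℂ) :
    ((A ⊗ₖ B) * (X ⊗ₖ 1 + 1 ⊗ₖ Y)).trace = (A * X).trace * B.trace + A.trace * (B * Y).trace := by
  rw [Matrix.mul_add, trace_add, ← mul_kronecker_mul, ← mul_kronecker_mul, trace_kronecker,
    trace_kronecker, Matrix.mul_one, Matrix.mul_one]

end Bipartite

theorem thermal_channel_freeEnergy_nonincreasing_general
    {n a : Type*} [Fintype n] [DecidableEq n]
    [Fintype a] [DecidableEq a] [Nonempty a]
    (Hm : Matrix n n ℂ) (HA : Matrix a a ℂ)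
    (hHA : HA.IsHermitian)
    (β : ℝ) (hβ : 0 < β)
    (V : Matrix (n × a) (n × a) ℂ) (hV : V ∈ Matrix.unitaryGroup (n × a) ℂ)
    (hcomm : V * (Hm ⊗ₖ (1 : Matrix a a ℂ) + (1 : Matrix n n ℂ) ⊗ₖ HA) =
      (Hm ⊗ₖ (1 : Matrix a a ℂ) + (1 : Matrix n n ℂ) ⊗ₖ HA) * V)
    (Φ : Matrix n n ℂ → Matrix n n ℂ)
    (hΦ : ∀ ρ, Φ ρ = ptrace₂ (V * (ρ ⊗ₖ gibbs β HA) * Vᴴ)) :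
    ∀ ρ, IsDensityMatrix ρ → freeEnergy (Φ ρ) Hm (1 / β) ≤ freeEnergy ρ Hm (1 / β) := by
  intro ρ hρ
  set τ := gibbs β HA
  set σ := V * (ρ ⊗ₖ τ) * Vᴴ
  have hτ : IsDensityMatrix τ := isDensityMatrix_gibbs β hHA
  have hσ : IsDensityMatrix σ := (hρ.kronecker hτ).unitary_conj hV
  have hentropy : vnEntropy ρ + vnEntropy τ ≤ vnEntropy (Φ ρ) + vnEntropy (ptrace₁ σ) := by
    rw [← vnEntropy_kronecker hρ.1.1 hτ.1.1 hρ.2 hτ.2,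
      ← vnEntropy_unitary_conj (hρ.kronecker hτ).1.1 hV, hΦ]
    exact vnEntropy_le_vnEntropy_ptrace₂_add_vnEntropy_ptrace₁ hσ
  have henergy : (Φ ρ * Hm).trace + (ptrace₁ σ * HA).trace = (ρ * Hm).trace + (τ * HA).trace := by
    rw [hΦ, trace_ptrace₂_mul, trace_ptrace₁_mul, ← trace_add, ← Matrix.mul_add,
      trace_unitary_conj_mul_of_commute hV hcomm, trace_kronecker_mul_add_kronecker, hρ.2, hτ.2,
      mul_one, one_mul]
  have hgibbs := freeEnergy_gibbs_le hβ hHA hσ.ptrace₁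
  have hscaled := mul_le_mul_of_nonneg_left hentropy (one_div_nonneg.mpr hβ.le)
  have henergy_re := congrArg Complex.re henergy
  simp only [freeEnergy, Complex.add_re, mul_add] at hgibbs hscaled henergy_re ⊢
  linarith

/-- A thermal channel does not increase the free energy. -/
theorem thermal_channel_freeEnergy_nonincreasing
    {n a : Type*} [Fintype n] [DecidableEq n] [Nonempty n]
    [Fintype a] [DecidableEq a] [Nonempty a]
    (Hm : Matrix n n ℂ) (HA : Matrix a a ℂ)
    (hH : Hm.IsHermitian) (hHA : HA.IsHermitian)
    (β : ℝ) (hβ : 0 < β)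
    (V : Matrix (n × a) (n × a) ℂ) (hV : V ∈ Matrix.unitaryGroup (n × a) ℂ)
    (hcomm : V * (Hm ⊗ₖ (1 : Matrix a a ℂ) + (1 : Matrix n n ℂ) ⊗ₖ HA) =
      (Hm ⊗ₖ (1 : Matrix a a ℂ) + (1 : Matrix n n ℂ) ⊗ₖ HA) * V)
    (Φ : Matrix n n ℂ → Matrix n n ℂ)
    (hΦ : ∀ ρ, Φ ρ = ptrace₂ (V * (ρ ⊗ₖ gibbs β HA) * Vᴴ)) :
    ∀ ρ, IsDensityMatrix ρ → freeEnergy (Φ ρ) Hm (1 / β) ≤ freeEnergy ρ Hm (1 / β) :=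
  thermal_channel_freeEnergy_nonincreasing_general Hm HA hHA β hβ V hV hcomm Φ hΦ

end
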